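/- Let E be a real inner product space and let u, v ∈ E be unit vectors with angle θ ∈ (0, π) between them (⟨u, v⟩ = cos θ). Set T = v − u and define the adjoint scattering vector T′ = ‖T‖ · (v − (cos θ)·u)/‖v − (cos θ)·u‖. Then: (a) ⟨T′, u⟩ = 0; (b) ‖T′‖ = ‖T‖; (c) the angle between T and T′ equals θ/2; and (d) ‖T − T′‖ = 2·sin(θ/4)·‖T‖, so in particular ‖T − T′‖ ≤ (θ/2)·‖T‖. -/

import Mathlib

/-!
`T = v - u` and `T'` are the two equal sides of an isosceles triangle, so everything follows
from the chord formula `‖x - y‖ = 2 sin (∠(x, y) / 2) ‖x‖` for `‖x‖ = ‖y‖` once the angle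
between them is known. Writing `w = v - cos θ • u` for the component of `v` orthogonal to `u`,
`‖w‖ = sin θ`, `⟪T, w⟫ = ‖w‖²` and `‖T‖ = 2 sin (θ / 2)`, so
`cos ∠(T, T') = sin θ / (2 sin (θ / 2)) = cos (θ / 2)`.
-/

open Real InnerProductGeometry
open scoped RealInnerProductSpace

namespace InnerProductGeometry

variable {V : Type*} [NormedAddCommGroup V] [InnerProductSpace ℝ V]

theorem norm_sub_eq_two_mul_sin_half_angle_mul_norm {x y : V} (h : ‖x‖ = ‖y‖) :
    ‖x - y‖ = 2 * sin (angle x y / 2) * ‖x‖ := by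
  have hsin : 0 ≤ sin (angle x y / 2) :=
    sin_nonneg_of_nonneg_of_le_pi (by linarith [angle_nonneg x y])
      (by linarith [angle_le_pi x y, pi_pos])
  have hcos : cos (angle x y) = 1 - 2 * sin (angle x y / 2) ^ 2 := by
    rw [← cos_two_mul_eq_one_sub, mul_div_cancel₀ _ two_ne_zero]
  refine (sq_eq_sq₀ (norm_nonneg _) (by positivity)).mp ?_
  have law := norm_sub_sq_eq_norm_sq_add_norm_sq_sub_two_mul_norm_mul_norm_mul_cos_angle x y
  rw [← h, hcos] at law
  linear_combination law

theorem angle_eq_of_inner_eq_cos {u v : V} (hu : ‖u‖ = 1) (hv : ‖v‖ = 1) {θ : ℝ}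
    (hθ0 : 0 ≤ θ) (hθπ : θ ≤ π) (h : ⟪u, v⟫ = cos θ) : angle u v = θ := by
  rw [angle, h, hu, hv, mul_one, div_one, arccos_cos hθ0 hθπ]

theorem norm_sub_eq_two_mul_sin_half {u v : V} (hu : ‖u‖ = 1) (hv : ‖v‖ = 1) {θ : ℝ}
    (hθ0 : 0 ≤ θ) (hθπ : θ ≤ π) (h : ⟪u, v⟫ = cos θ) : ‖v - u‖ = 2 * sin (θ / 2) := by
  rw [norm_sub_eq_two_mul_sin_half_angle_mul_norm (hv.trans hu.symm), angle_comm,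
    angle_eq_of_inner_eq_cos hu hv hθ0 hθπ h, hv, mul_one]

end InnerProductGeometry

section OrthogonalComponent

variable {V : Type*} [NormedAddCommGroup V] [InnerProductSpace ℝ V] {u v : V}

theorem inner_sub_inner_smul_self_eq_zero (hu : ‖u‖ = 1) : ⟪u, v - ⟪u, v⟫ • u⟫ = 0 := by
  rw [inner_sub_right, real_inner_smul_right, real_inner_self_eq_norm_sq, hu]
  ring

theorem norm_sub_inner_smul_sq (hu : ‖u‖ = 1) :
    ‖v - ⟪u, v⟫ • u‖ ^ 2 = ‖v‖ ^ 2 - ⟪u, v⟫ ^ 2 := by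
  rw [norm_sub_sq_real, real_inner_smul_right, real_inner_comm v u, norm_smul, hu, mul_one,
    norm_eq_abs, sq_abs]
  ring

theorem inner_sub_sub_inner_smul (hu : ‖u‖ = 1) :
    ⟪v - u, v - ⟪u, v⟫ • u⟫ = ‖v - ⟪u, v⟫ • u‖ ^ 2 := by
  have hvu : v - u = (v - ⟪u, v⟫ • u) + (⟪u, v⟫ - 1) • u := by
    rw [sub_smul, one_smul]; abel
  rw [hvu, inner_add_left, real_inner_smul_left, inner_sub_inner_smul_self_eq_zero hu, mul_zero,
    add_zero, real_inner_self_eq_norm_sq]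

theorem norm_sub_cos_smul_eq_sin (hu : ‖u‖ = 1) (hv : ‖v‖ = 1) {θ : ℝ} (hθ0 : 0 ≤ θ)
    (hθπ : θ ≤ π) (h : ⟪u, v⟫ = cos θ) : ‖v - cos θ • u‖ = sin θ := by
  refine (sq_eq_sq₀ (norm_nonneg _) (sin_nonneg_of_nonneg_of_le_pi hθ0 hθπ)).mp ?_
  rw [← h, norm_sub_inner_smul_sq hu, hv, h, sin_sq]
  ring

theorem angle_sub_sub_cos_smul (hu : ‖u‖ = 1) (hv : ‖v‖ = 1) {θ : ℝ} (hθ0 : 0 < θ)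
    (hθπ : θ < π) (h : ⟪u, v⟫ = cos θ) : angle (v - u) (v - cos θ • u) = θ / 2 := by
  have hw := norm_sub_cos_smul_eq_sin hu hv hθ0.le hθπ.le h
  have hT := norm_sub_eq_two_mul_sin_half hu hv hθ0.le hθπ.le h
  have hinner : ⟪v - u, v - cos θ • u⟫ = sin θ ^ 2 := by
    rw [← h, inner_sub_sub_inner_smul hu, h, hw]
  have hsin_half : 0 < sin (θ / 2) :=
    sin_pos_of_pos_of_lt_pi (by linarith) (by linarith [pi_pos])
  have hsin : sin θ = 2 * sin (θ / 2) * cos (θ / 2) := by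
    rw [← sin_two_mul, mul_div_cancel₀ _ two_ne_zero]
  have hcos : ⟪v - u, v - cos θ • u⟫ / (‖v - u‖ * ‖v - cos θ • u‖) = cos (θ / 2) := by
    rw [hinner, hw, hT, hsin]
    field_simp
  rw [angle, hcos, arccos_cos (by linarith) (by linarith)]

end OrthogonalComponent

/-- The adjoint scattering vector: for unit vectors `u, v` with angle `θ ∈ (0, π)`
between them (`⟪u, v⟫ = cos θ`), let `T = v − u` and
`T′ = ‖T‖ • (v − (cos θ) • u) / ‖v − (cos θ) • u‖`. Then `T′ ⊥ u`, `‖T′‖ = ‖T‖`,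
the angle between `T` and `T′` is `θ/2`, and
`‖T − T′‖ = 2 sin(θ/4) ‖T‖ ≤ (θ/2) ‖T‖`. -/
theorem adjoint_scattering_vector {E : Type*} [NormedAddCommGroup E]
    [InnerProductSpace ℝ E] (u v : E) (hu : ‖u‖ = 1) (hv : ‖v‖ = 1)
    (θ : ℝ) (hθ0 : 0 < θ) (hθπ : θ < π)
    (hangle : (inner ℝ u v : ℝ) = cos θ) (T T' : E) (hT : T = v - u)
    (hT' : T' = (‖T‖ / ‖v - cos θ • u‖) • (v - cos θ • u)) :
    (inner ℝ T' u : ℝ) = 0 ∧ ‖T'‖ = ‖T‖ ∧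
      InnerProductGeometry.angle T T' = θ / 2 ∧
      ‖T - T'‖ = 2 * sin (θ / 4) * ‖T‖ ∧ ‖T - T'‖ ≤ θ / 2 * ‖T‖ := by
  have hw := norm_sub_cos_smul_eq_sin hu hv hθ0.le hθπ.le hangle
  have hT_norm : ‖T‖ = 2 * sin (θ / 2) :=
    hT ▸ norm_sub_eq_two_mul_sin_half hu hv hθ0.le hθπ.le hangle
  have hsin : 0 < sin θ := sin_pos_of_pos_of_lt_pi hθ0 hθπ
  have hr : 0 < ‖T‖ / ‖v - cos θ • u‖ := by
    rw [hT_norm, hw]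
    have := sin_pos_of_pos_of_lt_pi (x := θ / 2) (by linarith) (by linarith [pi_pos])
    positivity
  have ha : ⟪T', u⟫ = 0 := by
    rw [hT', real_inner_smul_left, real_inner_comm, ← hangle,
      inner_sub_inner_smul_self_eq_zero hu, mul_zero]
  have hb : ‖T'‖ = ‖T‖ := by
    rw [hT', norm_smul, norm_of_nonneg hr.le, div_mul_cancel₀ _ (hw ▸ hsin.ne')]
  have hc : angle T T' = θ / 2 := by
    rw [hT', angle_smul_right_of_pos _ _ hr, hT]
    exact angle_sub_sub_cos_smul hu hv hθ0 hθπ hangle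
  have hd : ‖T - T'‖ = 2 * sin (θ / 4) * ‖T‖ := by
    rw [norm_sub_eq_two_mul_sin_half_angle_mul_norm hb.symm, hc, div_div]
    norm_num
  refine ⟨ha, hb, hc, hd, ?_⟩
  rw [hd]
  gcongr
  linarith [sin_le (x := θ / 4) (by linarith)]
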